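/- Let p be a prime with p ≡ -1 (mod m), k ≥ 1, and n = p^k n' with p ∤ n', n' ∉ {1, m}. Let ξ be a primitive m-th root of unity with m > 1. Then Φ_n(ξ) = ξ^{(-1)^k φ(n')}. -/

import Mathlib

/-!
Since `ξ ^ (p + 1) = 1`, we have `ξ ^ p = ξ⁻¹`. For `p ∤ n'` the identity
`Φ_{n'}(X ^ p) = Φ_{n'p}(X) Φ_{n'}(X)` evaluated at `ξ`, together with the palindromy
`Φ_{n'}(ξ⁻¹) = ξ^{-φ(n')} Φ_{n'}(ξ)` and `Φ_{n'}(ξ) ≠ 0` (as `ξ` is not a primitive `n'`-th root),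
gives `Φ_{n'p}(ξ) = ξ^{-φ(n')}`. Each further factor `p` uses `Φ_{np}(X) = Φ_n(X ^ p)` for `p ∣ n`,
which replaces `ξ` by `ξ⁻¹` and so flips the sign of the exponent.
-/

open Polynomial

theorem pow_eq_inv_of_pow_succ_eq_one {M : Type*} [DivisionMonoid M] {x : M} {p : ℕ}
    (hx : x ^ (p + 1) = 1) : x ^ p = x⁻¹ :=
  eq_inv_of_mul_eq_one_left (by rwa [← pow_succ])

section

variable {K : Type*} [Field K] {n : ℕ} {ζ : K}

theorem IsPrimitiveRoot.prod_neg_primitiveRoots (hζ : IsPrimitiveRoot ζ n) (hn : 1 < n) :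
    ∏ ν ∈ primitiveRoots n K, -ν = 1 := by
  have h := congrArg (eval 0) (cyclotomic_eq_prod_X_sub_primitiveRoots hζ)
  rw [← coeff_zero_eq_eval_zero, cyclotomic_coeff_zero K hn, eval_prod, eq_comm] at h
  simpa only [eval_sub, eval_X, eval_C, zero_sub] using h

theorem prod_sub_inv_primitiveRoots (x : K) :
    ∏ ν ∈ primitiveRoots n K, (x - ν⁻¹) = ∏ ν ∈ primitiveRoots n K, (x - ν) := by
  rcases n.eq_zero_or_pos with rfl | hn
  · simp
  have hinv : ∀ ν ∈ primitiveRoots n K, ν⁻¹ ∈ primitiveRoots n K := fun ν hν =>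
    (mem_primitiveRoots hn).2 ((mem_primitiveRoots hn).1 hν).inv
  exact Finset.prod_nbij' (·⁻¹) (·⁻¹) hinv hinv (fun ν _ => inv_inv ν) (fun ν _ => inv_inv ν)
    fun _ _ => rfl

theorem IsPrimitiveRoot.cyclotomic_eval_inv (hζ : IsPrimitiveRoot ζ n) (hn : 1 < n) {x : K}
    (hx : x ≠ 0) : (cyclotomic n K).eval x⁻¹ = x⁻¹ ^ n.totient * (cyclotomic n K).eval x := by
  have hn0 : 0 < n := by omega
  have hS : ∀ ν ∈ primitiveRoots n K, x⁻¹ - ν⁻¹ = x⁻¹ * (-ν)⁻¹ * (x - ν) := by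
    intro ν hν
    have := ((mem_primitiveRoots hn0).1 hν).ne_zero hn0.ne'
    field_simp
    ring
  simp only [cyclotomic_eq_prod_X_sub_primitiveRoots hζ, eval_prod, eval_sub, eval_X, eval_C]
  rw [← prod_sub_inv_primitiveRoots, Finset.prod_congr rfl hS, Finset.prod_mul_distrib,
    Finset.prod_mul_distrib, Finset.prod_const, hζ.card_primitiveRoots, Finset.prod_inv_distrib,
    hζ.prod_neg_primitiveRoots hn, inv_one, mul_one]

variable {p : ℕ} {x : K}

theorem IsPrimitiveRoot.cyclotomic_mul_prime_eval_of_pow_succ_eq_one (hζ : IsPrimitiveRoot ζ n)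
    (hn : 1 < n) (hp : p.Prime) (hpn : ¬ p ∣ n) (hx : x ^ (p + 1) = 1)
    (hxn : (cyclotomic n K).eval x ≠ 0) :
    (cyclotomic (n * p) K).eval x = x⁻¹ ^ n.totient := by
  have hx0 : x ≠ 0 := right_ne_zero_of_mul_eq_one (pow_succ x p ▸ hx)
  have h := congrArg (eval x) (cyclotomic_expand_eq_cyclotomic_mul hp hpn K)
  rw [expand_eval, pow_eq_inv_of_pow_succ_eq_one hx, eval_mul, hζ.cyclotomic_eval_inv hn hx0] at h
  exact (mul_right_cancel₀ hxn h).symm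

theorem IsPrimitiveRoot.cyclotomic_prime_pow_mul_eval_of_pow_succ_eq_one
    (hζ : IsPrimitiveRoot ζ n) (hn : 1 < n) (hp : p.Prime) (hpn : ¬ p ∣ n) (k : ℕ) :
    ∀ {x : K}, x ^ (p + 1) = 1 → (cyclotomic n K).eval x ≠ 0 →
      (cyclotomic (p ^ (k + 1) * n) K).eval x = x ^ ((-1 : ℤ) ^ (k + 1) * n.totient) := by
  induction k with
  | zero =>
    intro x hx hxn
    rw [pow_one, mul_comm, hζ.cyclotomic_mul_prime_eval_of_pow_succ_eq_one hn hp hpn hx hxn]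
    simp [zpow_neg]
  | succ k ih =>
    intro x hx hxn
    have hx0 : x ≠ 0 := right_ne_zero_of_mul_eq_one (pow_succ x p ▸ hx)
    have hx' : x⁻¹ ^ (p + 1) = 1 := by rw [inv_pow, hx, inv_one]
    have hxn' : (cyclotomic n K).eval x⁻¹ ≠ 0 := by
      rw [hζ.cyclotomic_eval_inv hn hx0]
      exact mul_ne_zero (pow_ne_zero _ (inv_ne_zero hx0)) hxn
    have hdvd : p ∣ p ^ (k + 1) * n := dvd_mul_of_dvd_left (dvd_pow_self p k.succ_ne_zero) n
    have h := congrArg (eval x) (cyclotomic_expand_eq_cyclotomic hp hdvd K)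
    rw [expand_eval, pow_eq_inv_of_pow_succ_eq_one hx] at h
    rw [pow_succ, mul_right_comm, ← h, ih hx' hxn', inv_zpow']
    congr 1
    ring

end

theorem cyclotomic_eval_primitiveRoot_of_prime_neg_one_mod_general (m p k n n' : ℕ)
    (hp : p.Prime) (hpm : (m : ℤ) ∣ (p : ℤ) + 1) (hk : 1 ≤ k)
    (hn : n = p ^ k * n') (hpn' : ¬ p ∣ n') (hn'1 : n' ≠ 1) (hn'm : n' ≠ m)
    (ξ : ℂ) (hξ : IsPrimitiveRoot ξ m) :
    (cyclotomic n ℂ).eval ξ = ξ ^ ((-1 : ℤ) ^ k * (n'.totient : ℤ)) := by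
  obtain ⟨k, rfl⟩ := Nat.exists_eq_add_of_le' hk
  have hn'0 : n' ≠ 0 := by rintro rfl; exact hpn' (dvd_zero p)
  have hn' : 1 < n' := by omega
  have hξp : ξ ^ (p + 1) = 1 := (hξ.pow_eq_one_iff_dvd _).2 (by exact_mod_cast hpm)
  have hξn' : (cyclotomic n' ℂ).eval ξ ≠ 0 := by
    have : NeZero (n' : ℂ) := ⟨Nat.cast_ne_zero.2 hn'0⟩
    exact fun h => hn'm ((isRoot_cyclotomic_iff.1 h).unique hξ)
  rw [hn]
  exact (Complex.isPrimitiveRoot_exp n' hn'0).cyclotomic_prime_pow_mul_eval_of_pow_succ_eq_one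
    hn' hp hpn' k hξp hξn'

theorem cyclotomic_eval_primitiveRoot_of_prime_neg_one_mod (m p k n n' : ℕ) (hm : 1 < m)
    (hp : p.Prime) (hpm : (m : ℤ) ∣ (p : ℤ) + 1) (hk : 1 ≤ k)
    (hn : n = p ^ k * n') (hpn' : ¬ p ∣ n') (hn'1 : n' ≠ 1) (hn'm : n' ≠ m)
    (ξ : ℂ) (hξ : IsPrimitiveRoot ξ m) :
    (cyclotomic n ℂ).eval ξ = ξ ^ ((-1 : ℤ) ^ k * (n'.totient : ℤ)) :=
  cyclotomic_eval_primitiveRoot_of_prime_neg_one_mod_general m p k n n' hp hpm hk hn hpn' hn'1 hn'm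
    ξ hξ
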